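/- With the notation of Construction 2, each set S'_{c,α} consists of 2^{u+s} pairwise orthogonal plateaued sequences of length 2^{u+m}, so #S'_{c,α} / #S_{c,α} = 2^u. -/
import Mathlib


open Finset

/-- mod-2 inner product on `F_2^n`. -/
def dotp {n : ℕ} (a b : Fin n → ZMod 2) : ZMod 2 := ∑ i, a i * b i

/-- `(-1)^v` for `v ∈ F_2`. -/
def sgn (v : ZMod 2) : ℤ := (-1 : ℤ) ^ v.val

/-- Integer inner product of the ±1-sequences of two Boolean functions on F_2^s × F_2^t. -/
def seqInnerP {s t : ℕ} (f g : (Fin s → ZMod 2) × (Fin t → ZMod 2) → ZMod 2) : ℤ :=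
  ∑ p : (Fin s → ZMod 2) × (Fin t → ZMod 2), sgn (f p) * sgn (g p)

/-- Integer inner product of the ±1-sequences of two Boolean functions on
F_2^u × (F_2^s × F_2^t). -/
def seqInner3 {u s t : ℕ}
    (f g : (Fin u → ZMod 2) × ((Fin s → ZMod 2) × (Fin t → ZMod 2)) → ZMod 2) : ℤ :=
  ∑ p : (Fin u → ZMod 2) × ((Fin s → ZMod 2) × (Fin t → ZMod 2)), sgn (f p) * sgn (g p)

/-- Walsh transform of a function on F_2^u × (F_2^s × F_2^t). -/
def walsh3 {u s t : ℕ}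
    (f : (Fin u → ZMod 2) × ((Fin s → ZMod 2) × (Fin t → ZMod 2)) → ZMod 2)
    (a : Fin u → ZMod 2) (b : Fin s → ZMod 2) (w : Fin t → ZMod 2) : ℤ :=
  ∑ p : (Fin u → ZMod 2) × ((Fin s → ZMod 2) × (Fin t → ZMod 2)),
    sgn (f p + dotp a p.1 + dotp b p.2.1 + dotp w p.2.2)

/-- the integer `[y]` represented by the binary vector `y ∈ F_2^s`. -/
def intRep {s : ℕ} (y : Fin s → ZMod 2) : ℕ := ∑ j : Fin s, (y j).val * 2 ^ (j : ℕ)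

/-- Construction 1: the component function f_c = c·F, where
f_i(y,x) = π(γ^{[y]+i})·x for i = 1,…,t. -/
noncomputable def conF {s t : ℕ} (γ : GaloisField 2 t)
    (π : GaloisField 2 t ≃ₗ[ZMod 2] (Fin t → ZMod 2)) (c : Fin t → ZMod 2)
    (p : (Fin s → ZMod 2) × (Fin t → ZMod 2)) : ZMod 2 :=
  ∑ i : Fin t, c i * dotp (π (γ ^ (intRep p.1 + (i : ℕ) + 1))) p.2

/-- Construction 2: the extended function g_c + l' = c·H + c·F + l'_{(a,β),α}. -/
noncomputable def extFn {u s t : ℕ} (γ : GaloisField 2 t)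
    (π : GaloisField 2 t ≃ₗ[ZMod 2] (Fin t → ZMod 2))
    (H : (Fin u → ZMod 2) → (Fin t → ZMod 2)) (c : Fin t → ZMod 2)
    (a : Fin u → ZMod 2) (β : Fin s → ZMod 2) (α : Fin t → ZMod 2)
    (p : (Fin u → ZMod 2) × ((Fin s → ZMod 2) × (Fin t → ZMod 2))) : ZMod 2 :=
  (∑ i, c i * H p.1 i) + conF γ π c p.2 + dotp a p.1 + dotp β p.2.1 + dotp α p.2.2

/-- Construction 1: the function f_c + l_{β,α}. -/
noncomputable def origFn {s t : ℕ} (γ : GaloisField 2 t)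
    (π : GaloisField 2 t ≃ₗ[ZMod 2] (Fin t → ZMod 2)) (c : Fin t → ZMod 2)
    (β : Fin s → ZMod 2) (α : Fin t → ZMod 2)
    (p : (Fin s → ZMod 2) × (Fin t → ZMod 2)) : ZMod 2 :=
  conF γ π c p + dotp β p.1 + dotp α p.2
lemma sgn_zero : sgn 0 = 1 := by decide

lemma sgn_add (x y : ZMod 2) : sgn (x + y) = sgn x * sgn y := by revert x y; decide

lemma sgn_add_one (x : ZMod 2) : sgn (x + 1) = -sgn x := by revert x; decide

lemma sgn_inj {x y : ZMod 2} (h : sgn x = sgn y) : x = y := by revert x y h; decide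

lemma zmod2_ne_zero {v : ZMod 2} (h : v ≠ 0) : v = 1 := by revert v h; decide

lemma dotp_add_left {n : ℕ} (a b x : Fin n → ZMod 2) :
    dotp (a + b) x = dotp a x + dotp b x := by
  simp [dotp, add_mul, Finset.sum_add_distrib]

lemma dotp_add_right {n : ℕ} (a x y : Fin n → ZMod 2) :
    dotp a (x + y) = dotp a x + dotp a y := by
  simp [dotp, mul_add, Finset.sum_add_distrib]

lemma dotp_zero_left {n : ℕ} (x : Fin n → ZMod 2) : dotp 0 x = 0 := by simp [dotp]

lemma dotp_zero_right {n : ℕ} (a : Fin n → ZMod 2) : dotp a 0 = 0 := by simp [dotp]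

lemma dotp_single {n : ℕ} (d : Fin n → ZMod 2) (i : Fin n) :
    dotp d (Pi.single i 1) = d i := by
  simp [dotp, Pi.single_apply, mul_ite]

lemma eq_of_dotp_eq {n : ℕ} {a b : Fin n → ZMod 2}
    (h : ∀ z, dotp a z = dotp b z) : a = b := by
  funext i
  have := h (Pi.single i 1)
  simpa [dotp_single] using this

lemma sum_sgn_dotp {n : ℕ} (d : Fin n → ZMod 2) :
    ∑ z : Fin n → ZMod 2, sgn (dotp d z) = if d = 0 then 2 ^ n else 0 := by
  split_ifs with h
  · subst h
    simp [dotp_zero_left, sgn_zero, Finset.card_univ]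
  · have : ∃ i, d i ≠ 0 := by
      by_contra hc
      push_neg at hc
      exact h (funext hc)
    obtain ⟨i, hi⟩ := this
    have hdi : d i = 1 := zmod2_ne_zero hi
    apply Finset.sum_involution (fun z _ => z + Pi.single i 1)
    · intro z _
      rw [dotp_add_right, dotp_single, hdi, sgn_add_one]
      ring
    · intro z _ _ hz
      have := congrFun hz i
      simp at this
    · intro z _
      funext j
      by_cases hj : j = i
      · subst hj
        simp only [Pi.add_apply, Pi.single_eq_same]
        rw [add_assoc]
        norm_num
        decide
      · simp [Pi.single_apply, hj]
    · intro z _; exact Finset.mem_univ _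

lemma intRep_succ {s : ℕ} (y : Fin (s + 1) → ZMod 2) :
    intRep y = (y 0).val + 2 * intRep (y ∘ Fin.succ) := by
  rw [intRep, Fin.sum_univ_succ]
  simp only [Fin.val_zero, pow_zero, mul_one, intRep, Finset.mul_sum]
  congr 1
  apply Finset.sum_congr rfl
  intro j _
  simp [Fin.val_succ, pow_succ]
  ring

lemma intRep_lt {s : ℕ} (y : Fin s → ZMod 2) : intRep y < 2 ^ s := by
  induction s with
  | zero => simp [intRep]
  | succ n ih =>
    rw [intRep_succ]
    have h1 : (y 0).val < 2 := ZMod.val_lt _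
    have h2 := ih (y ∘ Fin.succ)
    have : (2:ℕ) ^ (n+1) = 2 * 2 ^ n := by ring
    omega

lemma intRep_injective {s : ℕ} : Function.Injective (intRep (s := s)) := by
  induction s with
  | zero => intro a b _; funext j; exact absurd j.2 (by omega)
  | succ n ih =>
    intro a b hab
    rw [intRep_succ, intRep_succ] at hab
    have h1 : (a 0).val < 2 := ZMod.val_lt _
    have h2 : (b 0).val < 2 := ZMod.val_lt _
    have hv : (a 0).val = (b 0).val := by omega
    have h0 : a 0 = b 0 := by
      revert hv; revert h1
      generalize a 0 = x; generalize b 0 = y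
      revert x y; decide
    have htl : (a ∘ Fin.succ) = (b ∘ Fin.succ) := ih (by omega)
    funext j
    rcases Fin.eq_zero_or_eq_succ j with hj | ⟨k, hk⟩
    · rw [hj]; exact h0
    · rw [hk]; exact congrFun htl k

section Field

variable {t : ℕ} (γ : GaloisField 2 t)

lemma gamma_ne_zero (ht : 2 ≤ t)
    (hγ : ∀ z : GaloisField 2 t, z ≠ 0 → ∃ n : ℕ, γ ^ n = z) : γ ≠ 0 := by
  classical
  haveI : Fintype (GaloisField 2 t) := Fintype.ofFinite _
  intro h0
  subst h0
  have hcard : Fintype.card (GaloisField 2 t) = 2 ^ t := by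
    rw [← Nat.card_eq_fintype_card]; exact GaloisField.card 2 t (by omega)
  have hsub : (Finset.univ : Finset (GaloisField 2 t)) ⊆ {0, 1} := by
    intro z _
    rcases eq_or_ne z 0 with hz | hz
    · simp [hz]
    · obtain ⟨n, hn⟩ := hγ z hz
      rcases Nat.eq_zero_or_pos n with h | h
      · subst h; simp at hn; simp [← hn]
      · rw [zero_pow (by omega)] at hn; exact absurd hn.symm hz
  have := Finset.card_le_card hsub
  rw [Finset.card_univ, hcard] at this
  have hc2 : ({0, 1} : Finset (GaloisField 2 t)).card ≤ 2 := Finset.card_le_two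
  have : 2 ^ t ≤ 2 := this.trans hc2
  have : 4 ≤ 2 ^ t := by calc (4:ℕ) = 2 ^ 2 := rfl
                             _ ≤ 2 ^ t := Nat.pow_le_pow_right (by omega) ht
  omega

lemma orderOf_gamma_ge (ht : t ≠ 0) (hγ0 : γ ≠ 0)
    (hγ : ∀ z : GaloisField 2 t, z ≠ 0 → ∃ n : ℕ, γ ^ n = z) :
    2 ^ t - 1 ≤ orderOf γ := by
  classical
  haveI : Fintype (GaloisField 2 t) := Fintype.ofFinite _
  have hcard : Fintype.card (GaloisField 2 t) = 2 ^ t := by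
    rw [← Nat.card_eq_fintype_card]; exact GaloisField.card 2 t ht
  have hpow : γ ^ (2 ^ t - 1) = 1 := by
    have := FiniteField.pow_card_sub_one_eq_one γ hγ0
    rwa [hcard] at this
  have hfin : IsOfFinOrder γ := isOfFinOrder_iff_pow_eq_one.2
    ⟨2 ^ t - 1, by have := Nat.one_lt_two_pow_iff.2 ht; omega, hpow⟩
  have hpos : 0 < orderOf γ := hfin.orderOf_pos
  have hsub : (Finset.univ.erase (0 : GaloisField 2 t)) ⊆
      (Finset.range (orderOf γ)).image (fun k => γ ^ k) := by
    intro z hz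
    obtain ⟨n, hn⟩ := hγ z (Finset.mem_erase.1 hz).1
    refine Finset.mem_image.2 ⟨n % orderOf γ, Finset.mem_range.2 (Nat.mod_lt _ hpos), ?_⟩
    rw [pow_mod_orderOf, hn]
  have h1 := Finset.card_le_card hsub
  have h2 : ((Finset.range (orderOf γ)).image (fun k => γ ^ k)).card ≤ orderOf γ :=
    (Finset.card_image_le).trans (by simp)
  have h3 : (Finset.univ.erase (0 : GaloisField 2 t)).card = 2 ^ t - 1 := by
    rw [Finset.card_erase_of_mem (Finset.mem_univ _), Finset.card_univ, hcard]
  omega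

lemma gamma_pow_injOn {s : ℕ} (hst : s < t) (hγ0 : γ ≠ 0)
    (hγ : ∀ z : GaloisField 2 t, z ≠ 0 → ∃ n : ℕ, γ ^ n = z) :
    Function.Injective (fun y : Fin s → ZMod 2 => γ ^ (intRep y + 1)) := by
  have hord := orderOf_gamma_ge γ (by omega) hγ0 hγ
  intro y1 y2 hy
  simp only at hy
  apply intRep_injective
  have h1 := intRep_lt y1
  have h2 := intRep_lt y2
  have hss : 2 ^ s < 2 ^ t := Nat.pow_lt_pow_right (by omega) hst
  by_contra hne
  -- wlog via cases
  rcases Nat.lt_or_ge (intRep y1) (intRep y2) with hlt | hge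
  · have key : γ ^ (intRep y2 - intRep y1) = 1 := by
      have : γ ^ (intRep y1 + 1) * γ ^ (intRep y2 - intRep y1) = γ ^ (intRep y1 + 1) * 1 := by
        rw [mul_one, ← pow_add]
        rw [hy]
        congr 1
        omega
      exact mul_left_cancel₀ (pow_ne_zero _ hγ0) this
    have hdvd := orderOf_dvd_of_pow_eq_one key
    have := Nat.le_of_dvd (by omega) hdvd
    omega
  · have hlt2 : intRep y2 < intRep y1 := by omega
    have key : γ ^ (intRep y1 - intRep y2) = 1 := by
      have : γ ^ (intRep y2 + 1) * γ ^ (intRep y1 - intRep y2) = γ ^ (intRep y2 + 1) * 1 := by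
        rw [mul_one, ← pow_add, hy.symm]
        congr 1
        omega
      exact mul_left_cancel₀ (pow_ne_zero _ hγ0) this
    have hdvd := orderOf_dvd_of_pow_eq_one key
    have := Nat.le_of_dvd (by omega) hdvd
    omega

end Field

open IntermediateField Polynomial in

lemma delta_ne_zero {t : ℕ} (ht : t ≠ 0) (γ : GaloisField 2 t)
    (hγ : ∀ z : GaloisField 2 t, z ≠ 0 → ∃ n : ℕ, γ ^ n = z)
    {c : Fin t → ZMod 2} (hc : c ≠ 0) :
    (∑ i : Fin t, c i • γ ^ (i : ℕ)) ≠ 0 := by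
  have hint : IsIntegral (ZMod 2) γ := IsIntegral.of_finite _ _
  have htop : (ZMod 2)⟮γ⟯ = (⊤ : IntermediateField (ZMod 2) (GaloisField 2 t)) := by
    rw [eq_top_iff]
    intro z _
    rcases eq_or_ne z 0 with hz | hz
    · exact hz ▸ zero_mem _
    · obtain ⟨n, hn⟩ := hγ z hz
      exact hn ▸ pow_mem (mem_adjoin_simple_self _ _) n
  have hfr : Module.finrank (ZMod 2) (GaloisField 2 t) = t := GaloisField.finrank 2 ht
  have hdeg : (minpoly (ZMod 2) γ).natDegree = t := by
    rw [← IntermediateField.adjoin.finrank hint, htop,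
      IntermediateField.finrank_top' (F := ZMod 2) (E := GaloisField 2 t)]
    exact hfr
  set P : Polynomial (ZMod 2) := ∑ i : Fin t, Polynomial.C (c i) * Polynomial.X ^ (i : ℕ)
    with hP
  have hcoeff : ∀ k : Fin t, P.coeff (k : ℕ) = c k := by
    intro k
    rw [hP, Polynomial.finset_sum_coeff]
    have : ∀ i : Fin t, (Polynomial.C (c i) * Polynomial.X ^ (i : ℕ)).coeff (k : ℕ)
        = if i = k then c i else 0 := by
      intro i
      rw [Polynomial.coeff_C_mul, Polynomial.coeff_X_pow]
      by_cases h : i = k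
      · simp [h]
      · have hv : ¬ ((i : ℕ) = (k : ℕ)) := fun hh => h (Fin.ext hh)
        rw [if_neg (fun hh => hv hh.symm), if_neg h, mul_zero]
    simp only [this]
    simp
  have hPne : P ≠ 0 := by
    intro h0
    apply hc
    funext i
    have := hcoeff i
    rw [h0] at this
    simp at this
    exact this.symm
  have haeval : Polynomial.aeval γ P = ∑ i : Fin t, c i • γ ^ (i : ℕ) := by
    rw [hP, map_sum]
    apply Finset.sum_congr rfl
    intro i _
    rw [map_mul, Polynomial.aeval_C, map_pow, Polynomial.aeval_X, Algebra.smul_def]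
  intro hzero
  have hroot : Polynomial.aeval γ P = 0 := by rw [haeval, hzero]
  have hmin := minpoly.degree_le_of_ne_zero (ZMod 2) γ hPne hroot
  have hnd : P.natDegree ≤ t - 1 := by
    refine (Polynomial.natDegree_sum_le _ _).trans ?_
    rw [Finset.fold_max_le]
    constructor
    · omega
    · intro i _
      refine (Polynomial.natDegree_C_mul_le _ _).trans ?_
      rw [Polynomial.natDegree_X_pow]
      have := i.2
      omega
  have := Polynomial.natDegree_le_natDegree hmin
  omega

lemma dotp_smul_left {n : ℕ} (c : ZMod 2) (v x : Fin n → ZMod 2) :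
    dotp (c • v) x = c * dotp v x := by
  simp [dotp, Finset.mul_sum, mul_assoc]

lemma dotp_sum_left {n : ℕ} {ι : Type*} (S : Finset ι) (v : ι → Fin n → ZMod 2)
    (x : Fin n → ZMod 2) : dotp (∑ i ∈ S, v i) x = ∑ i ∈ S, dotp (v i) x := by
  simp only [dotp, Finset.sum_apply, Finset.sum_mul]
  exact Finset.sum_comm

lemma conF_eq {s t : ℕ} (γ : GaloisField 2 t)
    (π : GaloisField 2 t ≃ₗ[ZMod 2] (Fin t → ZMod 2)) (c : Fin t → ZMod 2)
    (p : (Fin s → ZMod 2) × (Fin t → ZMod 2)) :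
    conF γ π c p
      = dotp (π (γ ^ (intRep p.1 + 1) * ∑ i : Fin t, c i • γ ^ (i : ℕ))) p.2 := by
  rw [conF]
  have h1 : ∀ i : Fin t, c i * dotp (π (γ ^ (intRep p.1 + (i : ℕ) + 1))) p.2
      = dotp (c i • π (γ ^ (intRep p.1 + (i : ℕ) + 1))) p.2 := by
    intro i; rw [dotp_smul_left]
  simp only [h1]
  rw [← dotp_sum_left]
  congr 1
  rw [Finset.mul_sum, map_sum]
  apply Finset.sum_congr rfl
  intro i _
  rw [← map_smul]
  congr 1
  rw [mul_smul_comm]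
  congr 1
  rw [← pow_add]
  congr 1
  omega

lemma sum_split {u s t : ℕ} (F : (Fin u → ZMod 2) → ZMod 2)
    (G : (Fin s → ZMod 2) × (Fin t → ZMod 2) → ZMod 2) :
    ∑ p : (Fin u → ZMod 2) × ((Fin s → ZMod 2) × (Fin t → ZMod 2)), sgn (F p.1 + G p.2)
      = (∑ z, sgn (F z)) * (∑ yx : (Fin s → ZMod 2) × (Fin t → ZMod 2), sgn (G yx)) := by
  rw [Fintype.sum_prod_type]
  simp only [sgn_add]
  rw [Finset.sum_mul_sum]

lemma innerSumConF {s t : ℕ} (γ : GaloisField 2 t)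
    (π : GaloisField 2 t ≃ₗ[ZMod 2] (Fin t → ZMod 2)) (c : Fin t → ZMod 2)
    (B : Fin s → ZMod 2) (W : Fin t → ZMod 2) :
    ∑ yx : (Fin s → ZMod 2) × (Fin t → ZMod 2),
        sgn (conF γ π c yx + dotp B yx.1 + dotp W yx.2)
      = ∑ y : Fin s → ZMod 2, sgn (dotp B y) *
          (if π (γ ^ (intRep y + 1) * ∑ i : Fin t, c i • γ ^ (i : ℕ)) + W = 0
            then (2 ^ t : ℤ) else 0) := by
  classical
  rw [Fintype.sum_prod_type]
  apply Finset.sum_congr rfl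
  intro y _
  have hpt : ∀ x : Fin t → ZMod 2,
      conF γ π c (y, x) + dotp B y + dotp W x
        = dotp B y + dotp (π (γ ^ (intRep y + 1) * ∑ i : Fin t, c i • γ ^ (i : ℕ)) + W) x := by
    intro x
    rw [conF_eq, dotp_add_left]
    ring
  simp only [hpt, sgn_add]
  rw [← Finset.mul_sum, sum_sgn_dotp]

lemma sgn_cases (v : ZMod 2) : sgn v = 1 ∨ sgn v = -1 := by revert v; decide

lemma zmod2_add_eq_zero {x y : ZMod 2} (h : x + y = 0) : x = y := by revert x y h; decide

lemma htwo : (2 : ZMod 2) = 0 := by decide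

lemma sum_sgn_dotp_prod {s t : ℕ} (B : Fin s → ZMod 2) :
    ∑ yx : (Fin s → ZMod 2) × (Fin t → ZMod 2), sgn (dotp B yx.1)
      = (2 ^ t : ℤ) * ∑ y : Fin s → ZMod 2, sgn (dotp B y) := by
  rw [Fintype.sum_prod_type, Finset.mul_sum]
  apply Finset.sum_congr rfl
  intro y _
  have h : ∑ y_1 : Fin t → ZMod 2, sgn (dotp B (y, y_1).1)
      = ∑ _y1 : Fin t → ZMod 2, sgn (dotp B y) := rfl
  rw [h, Finset.sum_const, Finset.card_univ]
  have : Fintype.card (Fin t → ZMod 2) = 2 ^ t := by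
    simp [Fintype.card_fun]
  rw [this]
  push_cast
  ring

/-- each extended set S'_{c,α} of Construction 2 consists of
2^{u+s} pairwise orthogonal plateaued sequences of length 2^{u+m}; in
particular #S'_{c,α} = 2^u · #S_{c,α}. -/
theorem stmt_13 {m s t u : ℕ} (hm : m = s + t) (hst : s < t)
    (hu : Even u) (hut : 2 * t ≤ u)
    (γ : GaloisField 2 t) (hγ : ∀ z : GaloisField 2 t, z ≠ 0 → ∃ n : ℕ, γ ^ n = z)
    (π : GaloisField 2 t ≃ₗ[ZMod 2] (Fin t → ZMod 2))
    (H : (Fin u → ZMod 2) → (Fin t → ZMod 2))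
    (hH : ∀ c : Fin t → ZMod 2, c ≠ 0 → ∀ a : Fin u → ZMod 2,
      (∑ z : Fin u → ZMod 2, sgn ((∑ i, c i * H z i) + dotp a z)) = 2 ^ (u / 2) ∨
      (∑ z : Fin u → ZMod 2, sgn ((∑ i, c i * H z i) + dotp a z)) = -(2 ^ (u / 2)))
    (c α : Fin t → ZMod 2) :
    (∀ q q' : (Fin u → ZMod 2) × (Fin s → ZMod 2), q ≠ q' →
      seqInner3 (extFn γ π H c q.1 q.2 α) (extFn γ π H c q'.1 q'.2 α) = 0) ∧
    (∀ q : (Fin u → ZMod 2) × (Fin s → ZMod 2), ∃ lam : ℕ,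
      ∀ (a : Fin u → ZMod 2) (b : Fin s → ZMod 2) (w : Fin t → ZMod 2),
        walsh3 (extFn γ π H c q.1 q.2 α) a b w ∈
          ({0, 2 ^ lam, -(2 ^ lam)} : Set ℤ)) ∧
    (Finset.univ.image
        (fun q : (Fin u → ZMod 2) × (Fin s → ZMod 2) =>
          fun p : (Fin u → ZMod 2) × ((Fin s → ZMod 2) × (Fin t → ZMod 2)) =>
            sgn (extFn γ π H c q.1 q.2 α p))).card = 2 ^ (u + s) ∧
    (Finset.univ.image
        (fun q : (Fin u → ZMod 2) × (Fin s → ZMod 2) =>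
          fun p : (Fin u → ZMod 2) × ((Fin s → ZMod 2) × (Fin t → ZMod 2)) =>
            sgn (extFn γ π H c q.1 q.2 α p))).card
      = 2 ^ u *
        (Finset.univ.image
          (fun β : Fin s → ZMod 2 =>
            fun p : (Fin s → ZMod 2) × (Fin t → ZMod 2) =>
              sgn (origFn γ π c β α p))).card := by
  classical
  have ht0 : t ≠ 0 := by omega
  -- Part 1 : orthogonality
  have part1 : ∀ q q' : (Fin u → ZMod 2) × (Fin s → ZMod 2), q ≠ q' →
      seqInner3 (extFn γ π H c q.1 q.2 α) (extFn γ π H c q'.1 q'.2 α) = 0 := by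
    intro q q' hne
    rw [seqInner3]
    have h1 : ∀ p : (Fin u → ZMod 2) × ((Fin s → ZMod 2) × (Fin t → ZMod 2)),
        sgn (extFn γ π H c q.1 q.2 α p) * sgn (extFn γ π H c q'.1 q'.2 α p)
          = sgn (dotp (q.1 + q'.1) p.1 + dotp (q.2 + q'.2) p.2.1) := by
      intro p
      rw [← sgn_add]
      congr 1
      rw [extFn, extFn, dotp_add_left, dotp_add_left]
      linear_combination ((∑ i, c i * H p.1 i) + conF γ π c p.2 + dotp α p.2.2) * htwo
    simp only [h1]
    rw [sum_split (fun z => dotp (q.1 + q'.1) z) (fun yx => dotp (q.2 + q'.2) yx.1)]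
    by_cases hA : q.1 + q'.1 = 0
    · have hq1 : q.1 = q'.1 := by
        apply funext; intro i; exact zmod2_add_eq_zero (congrFun hA i)
      have hB : q.2 + q'.2 ≠ 0 := by
        intro hB0
        apply hne
        have hq2 : q.2 = q'.2 := by
          apply funext; intro i; exact zmod2_add_eq_zero (congrFun hB0 i)
        exact Prod.ext hq1 hq2
      rw [sum_sgn_dotp_prod, sum_sgn_dotp (q.2 + q'.2), if_neg hB]
      ring
    · rw [sum_sgn_dotp, if_neg hA, zero_mul]
  -- Part 3 : cardinality of the extended family
  have hinj3 : Function.Injective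
      (fun q : (Fin u → ZMod 2) × (Fin s → ZMod 2) =>
        fun p : (Fin u → ZMod 2) × ((Fin s → ZMod 2) × (Fin t → ZMod 2)) =>
          sgn (extFn γ π H c q.1 q.2 α p)) := by
    intro q q' heq
    have hfe : ∀ p, extFn γ π H c q.1 q.2 α p = extFn γ π H c q'.1 q'.2 α p :=
      fun p => sgn_inj (congrFun heq p)
    have key : ∀ z y, dotp q.1 z + dotp q.2 y = dotp q'.1 z + dotp q'.2 y := by
      intro z y
      have h := hfe (z, (y, 0))
      rw [extFn, extFn] at h
      linear_combination h
    have h1 : q.1 = q'.1 := by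
      apply eq_of_dotp_eq
      intro z
      have := key z 0
      rwa [dotp_zero_right, dotp_zero_right, add_zero, add_zero] at this
    have h2 : q.2 = q'.2 := by
      apply eq_of_dotp_eq
      intro y
      have := key 0 y
      rwa [dotp_zero_right, dotp_zero_right, zero_add, zero_add] at this
    exact Prod.ext h1 h2
  have hcardU : Fintype.card (Fin u → ZMod 2) = 2 ^ u := by simp [Fintype.card_fun]
  have hcardS : Fintype.card (Fin s → ZMod 2) = 2 ^ s := by simp [Fintype.card_fun]
  have part3 : (Finset.univ.image
      (fun q : (Fin u → ZMod 2) × (Fin s → ZMod 2) =>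
        fun p : (Fin u → ZMod 2) × ((Fin s → ZMod 2) × (Fin t → ZMod 2)) =>
          sgn (extFn γ π H c q.1 q.2 α p))).card = 2 ^ (u + s) := by
    rw [Finset.card_image_of_injective _ hinj3, Finset.card_univ, Fintype.card_prod,
      hcardU, hcardS, ← pow_add]
  refine ⟨part1, ?_, part3, ?_⟩
  · -- Part 2 : plateaued
    intro q
    set δ : GaloisField 2 t := ∑ i : Fin t, c i • γ ^ (i : ℕ) with hδ
    have hwalsh : ∀ (a : Fin u → ZMod 2) (b : Fin s → ZMod 2) (w : Fin t → ZMod 2),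
        walsh3 (extFn γ π H c q.1 q.2 α) a b w
          = (∑ z, sgn ((∑ i, c i * H z i) + dotp (q.1 + a) z)) *
            (∑ y : Fin s → ZMod 2, sgn (dotp (q.2 + b) y) *
              (if π (γ ^ (intRep y + 1) * δ) + (α + w) = 0 then (2 ^ t : ℤ) else 0)) := by
      intro a b w
      rw [walsh3]
      have hext : ∀ p : (Fin u → ZMod 2) × ((Fin s → ZMod 2) × (Fin t → ZMod 2)),
          extFn γ π H c q.1 q.2 α p + dotp a p.1 + dotp b p.2.1 + dotp w p.2.2
            = ((∑ i, c i * H p.1 i) + dotp (q.1 + a) p.1)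
              + (conF γ π c p.2 + dotp (q.2 + b) p.2.1 + dotp (α + w) p.2.2) := by
        intro p
        rw [extFn, dotp_add_left, dotp_add_left, dotp_add_left]
        ring
      simp only [hext]
      rw [sum_split (fun z => (∑ i, c i * H z i) + dotp (q.1 + a) z)
        (fun yx => conF γ π c yx + dotp (q.2 + b) yx.1 + dotp (α + w) yx.2)]
      rw [innerSumConF]
    by_cases hc : c = 0
    · -- c = 0 : purely linear functions
      refine ⟨u + s + t, ?_⟩
      intro a b w
      rw [hwalsh a b w]
      simp only [Set.mem_insert_iff, Set.mem_singleton_iff]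
      have hδ0 : δ = 0 := by
        rw [hδ, hc]; simp
      have hCH : ∀ z : Fin u → ZMod 2, (∑ i, c i * H z i) = (0 : ZMod 2) := by
        intro z; rw [hc]; simp
      simp only [hCH, zero_add, hδ0, mul_zero, map_zero, zero_add]
      rw [sum_sgn_dotp]
      by_cases hw : α + w = 0
      · simp only [if_pos hw]
        rw [← Finset.sum_mul, sum_sgn_dotp]
        by_cases hB : q.2 + b = 0
        · rw [if_pos hB]
          by_cases hA : q.1 + a = 0
          · rw [if_pos hA]
            right; left
            rw [pow_add, pow_add]
            ring
          · rw [if_neg hA]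
            left; ring
        · rw [if_neg hB]
          left; ring
      · simp only [if_neg hw, mul_zero]
        left
        rw [Finset.sum_const_zero, mul_zero]
    · -- c ≠ 0
      refine ⟨u / 2 + t, ?_⟩
      intro a b w
      rw [hwalsh a b w]
      simp only [Set.mem_insert_iff, Set.mem_singleton_iff]
      have hδne : δ ≠ 0 := delta_ne_zero ht0 γ hγ hc
      have hinj : Function.Injective (fun y : Fin s → ZMod 2 => γ ^ (intRep y + 1)) := by
        by_cases hs : s = 0
        · subst hs
          intro y1 y2 _
          funext j
          exact absurd j.2 (by omega)
        · have ht2 : 2 ≤ t := by omega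
          exact gamma_pow_injOn γ hst (gamma_ne_zero γ ht2 hγ) hγ
      set Φ : Finset (Fin s → ZMod 2) :=
        Finset.univ.filter (fun y => π (γ ^ (intRep y + 1) * δ) + (α + w) = 0) with hΦ
      have hS2 : (∑ y : Fin s → ZMod 2, sgn (dotp (q.2 + b) y) *
            (if π (γ ^ (intRep y + 1) * δ) + (α + w) = 0 then (2 ^ t : ℤ) else 0))
          = ∑ y ∈ Φ, sgn (dotp (q.2 + b) y) * 2 ^ t := by
        rw [hΦ, Finset.sum_filter]
        apply Finset.sum_congr rfl
        intro y _
        by_cases hy : π (γ ^ (intRep y + 1) * δ) + (α + w) = 0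
        · rw [if_pos hy, if_pos hy]
        · rw [if_neg hy, if_neg hy, mul_zero]
      have hcard : Φ.card ≤ 1 := by
        rw [Finset.card_le_one]
        intro y1 hy1 y2 hy2
        rw [hΦ, Finset.mem_filter] at hy1 hy2
        have he : π (γ ^ (intRep y1 + 1) * δ) = π (γ ^ (intRep y2 + 1) * δ) :=
          add_right_cancel (hy1.2.trans hy2.2.symm)
        have he2 : γ ^ (intRep y1 + 1) * δ = γ ^ (intRep y2 + 1) * δ := π.injective he
        exact hinj (mul_right_cancel₀ hδne he2)
      rw [hS2]
      rcases Finset.eq_empty_or_nonempty Φ with hΦe | hΦne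
      · rw [hΦe, Finset.sum_empty, mul_zero]
        left; rfl
      · obtain ⟨y0, hy0⟩ := Finset.card_eq_one.1 (le_antisymm hcard hΦne.card_pos)
        rw [hy0, Finset.sum_singleton]
        rcases hH c hc (q.1 + a) with hz | hz <;> rw [hz] <;>
          rcases sgn_cases (dotp (q.2 + b) y0) with h | h <;> rw [h]
        · right; left; rw [pow_add]; ring
        · right; right; rw [pow_add]; ring
        · right; right; rw [pow_add]; ring
        · right; left; rw [pow_add]; ring
  · -- Part 4 : ratio of cardinalities
    have hinj4 : Function.Injective
        (fun β : Fin s → ZMod 2 =>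
          fun p : (Fin s → ZMod 2) × (Fin t → ZMod 2) =>
            sgn (origFn γ π c β α p)) := by
      intro β β' heq
      have hfe : ∀ p, origFn γ π c β α p = origFn γ π c β' α p :=
        fun p => sgn_inj (congrFun heq p)
      apply eq_of_dotp_eq
      intro y
      have h := hfe (y, 0)
      rw [origFn, origFn] at h
      linear_combination h
    rw [part3, Finset.card_image_of_injective _ hinj4, Finset.card_univ, hcardS, ← pow_add]
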